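/- Let H be a real Hilbert space and let φ₁, φ₂ : H → EReal be proper, convex, lower semicontinuous functions with intersecting effective domains. Suppose that the subdifferential of the sum equals the sum of the subdifferentials, i.e., for every x ∈ H, ∂(φ₁+φ₂)(x) = {y₁ + y₂ : y₁ ∈ ∂φ₁(x), y₂ ∈ ∂φ₂(x)}. Then R(∂(φ₁+φ₂)) and R(∂φ₁) + R(∂φ₂) are almost equal: they have the same closure and the same interior in H. -/

import Mathlib

open scoped Pointwise

/-- The subdifferential of `φ : H → EReal` at `x`. -/
def SubDiff {H : Type*} [NormedAddCommGroup H] [InnerProductSpace ℝ H]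
    (φ : H → EReal) (x : H) : Set H :=
  {y | φ x ≠ ⊤ ∧ φ x ≠ ⊥ ∧ ∀ z : H, φ x + ((inner ℝ y (z - x) : ℝ) : EReal) ≤ φ z}

/-- The range of the subdifferential of `φ`. -/
def SubDiffRange {H : Type*} [NormedAddCommGroup H] [InnerProductSpace ℝ H]
    (φ : H → EReal) : Set H :=
  {y | ∃ x : H, y ∈ SubDiff φ x}

/-- `φ` is proper: never `-∞` and finite somewhere. -/
def ProperFun {H : Type*} (φ : H → EReal) : Prop :=
  (∀ x : H, φ x ≠ ⊥) ∧ ∃ x : H, φ x ≠ ⊤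

/-- Convexity for an `EReal`-valued function. -/
def ConvexFunEReal {H : Type*} [AddCommGroup H] [Module ℝ H] (φ : H → EReal) : Prop :=
  ∀ x y : H, ∀ a b : ℝ, 0 ≤ a → 0 ≤ b → a + b = 1 →
    φ (a • x + b • y) ≤ (a : EReal) * φ x + (b : EReal) * φ y

/-!
Put `Φ = φ₁ + φ₂`, again proper, convex and lower semicontinuous. The sum rule gives
`R(∂Φ) ⊆ R(∂φ₁) + R(∂φ₂)`, and adding affine minorants gives `R(∂φ₁) + R(∂φ₂) ⊆ D(Φ*)`, so it
suffices that `D(Φ*) ⊆ closure R(∂Φ)` and `interior D(Φ*) ⊆ R(∂Φ)`.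

For the interior, Baire's theorem makes the epigraph of `Φ*` have nonempty interior, and by
convexity it then contains a point `(y, c)` above every `y ∈ interior D(Φ*)`; a hyperplane
supporting it at `(y, Φ* y)` yields a point `x` with `y ∈ ∂Φ(x)`. For the closure, the conjugate
of `Φ + ε/2 ‖·‖²` is finite everywhere, so `y ∈ ∂(Φ + ε/2 ‖·‖²)(x_ε)`, that is
`y - ε x_ε ∈ ∂Φ(x_ε)`, and `ε ‖x_ε‖ → 0`.
-/

open Set Filter Topology
open scoped RealInnerProductSpace

lemma closure_eq_and_interior_eq_of_subset_of_subset {X : Type*} [TopologicalSpace X]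
    {A B C : Set X} (hAB : A ⊆ B) (hBC : B ⊆ C) (hCA : C ⊆ closure A)
    (hint : interior C ⊆ A) :
    closure A = closure B ∧ interior A = interior B :=
  ⟨(closure_mono hAB).antisymm (closure_minimal (hBC.trans hCA) isClosed_closure),
    (interior_mono hAB).antisymm
      ((interior_mono hBC).trans (interior_maximal hint isOpen_interior))⟩

lemma Convex.interior_image_fst_subset {E F : Type*} [AddCommGroup E] [Module ℝ E]
    [TopologicalSpace E] [IsTopologicalAddGroup E] [ContinuousSMul ℝ E]
    [AddCommGroup F] [Module ℝ F] [TopologicalSpace F] [IsTopologicalAddGroup F]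
    [ContinuousSMul ℝ F] {A : Set (E × F)} (hA : Convex ℝ A) (hne : (interior A).Nonempty) :
    interior (Prod.fst '' A) ⊆ Prod.fst '' interior A := by
  obtain ⟨⟨q, c⟩, hqc⟩ := hne
  intro y hy
  have hcont : Continuous fun t : ℝ => y + t • (y - q) := by fun_prop
  have hev : ∀ᶠ t in 𝓝 (0 : ℝ), y + t • (y - q) ∈ Prod.fst '' A :=
    hcont.continuousAt.preimage_mem_nhds (by simpa using mem_interior_iff_mem_nhds.1 hy)
  obtain ⟨t, ht, ⟨⟨_, d⟩, hwd, rfl⟩⟩ := hev.exists_gt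
  -- `y` divides the segment from `q` to `y + t • (y - q)` in the ratio `t : 1`.
  refine ⟨(t / (1 + t)) • (q, c) + (1 / (1 + t)) • (y + t • (y - q), d),
    hA.openSegment_interior_self_subset_interior hqc hwd
      ⟨t / (1 + t), 1 / (1 + t), by positivity, by positivity, by field_simp; ring, rfl⟩, ?_⟩
  have ht' : (1 + t) ≠ 0 := by positivity
  calc (t / (1 + t)) • q + (1 / (1 + t)) • (y + t • (y - q))
      = (1 + t)⁻¹ • ((1 + t) • y) := by module
    _ = y := inv_smul_smul₀ ht' y

def realEpigraph {X : Type*} (Φ : X → EReal) : Set (X × ℝ) := {q | Φ q.1 ≤ q.2}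

section ConvexFunEReal

variable {E : Type*} [AddCommGroup E] [Module ℝ E]

lemma ConvexFunEReal.add {f g : E → EReal} (hf : ConvexFunEReal f) (hg : ConvexFunEReal g) :
    ConvexFunEReal fun x => f x + g x := by
  intro x y a b ha hb hab
  calc f (a • x + b • y) + g (a • x + b • y)
      ≤ ((a : EReal) * f x + b * f y) + (a * g x + b * g y) :=
        add_le_add (hf x y a b ha hb hab) (hg x y a b ha hb hab)
    _ = a * (f x + g x) + b * (f y + g y) := by
        rw [EReal.left_distrib_of_nonneg_of_ne_top (by exact_mod_cast ha) (EReal.coe_ne_top a),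
          EReal.left_distrib_of_nonneg_of_ne_top (by exact_mod_cast hb) (EReal.coe_ne_top b)]
        abel

lemma ConvexOn.convexFunEReal_coe {g : E → ℝ} (hg : ConvexOn ℝ univ g) :
    ConvexFunEReal fun x => (g x : EReal) := by
  intro x y a b ha hb hab
  have h := hg.2 (mem_univ x) (mem_univ y) ha hb hab
  simp only [smul_eq_mul] at h
  show ((g (a • x + b • y) : ℝ) : EReal) ≤ (a : EReal) * g x + (b : EReal) * g y
  exact_mod_cast h

lemma ConvexFunEReal.convex_realEpigraph {Φ : E → EReal} (hΦ : ConvexFunEReal Φ) :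
    Convex ℝ (realEpigraph Φ) := by
  rintro ⟨x₁, t₁⟩ h₁ ⟨x₂, t₂⟩ h₂ a b ha hb hab
  calc Φ (a • x₁ + b • x₂) ≤ (a : EReal) * Φ x₁ + b * Φ x₂ := hΦ x₁ x₂ a b ha hb hab
    _ ≤ (a : EReal) * t₁ + b * t₂ :=
        add_le_add (mul_le_mul_of_nonneg_left h₁ (by exact_mod_cast ha))
          (mul_le_mul_of_nonneg_left h₂ (by exact_mod_cast hb))
    _ = ((a * t₁ + b * t₂ : ℝ) : EReal) := by norm_cast

end ConvexFunEReal

lemma ProperFun.add {X : Type*} {f g : X → EReal} (hf : ProperFun f) (hg : ProperFun g)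
    (h : ∃ x, f x ≠ ⊤ ∧ g x ≠ ⊤) : ProperFun fun x => f x + g x :=
  ⟨fun x => EReal.add_ne_bot_iff.2 ⟨hf.1 x, hg.1 x⟩,
    h.imp fun _ hx => EReal.add_ne_top hx.1 hx.2⟩

section Topology

variable {X : Type*} [TopologicalSpace X]

lemma LowerSemicontinuous.ereal_add {f g : X → EReal} (hf : LowerSemicontinuous f)
    (hg : LowerSemicontinuous g) (hf' : ∀ x, f x ≠ ⊥) (hg' : ∀ x, g x ≠ ⊥) :
    LowerSemicontinuous fun x => f x + g x :=
  hf.add' hg fun x => EReal.continuousAt_add (Or.inr (hg' x)) (Or.inl (hf' x))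

lemma LowerSemicontinuous.isClosed_realEpigraph {Φ : X → EReal} (hΦ : LowerSemicontinuous Φ) :
    IsClosed (realEpigraph Φ) :=
  hΦ.isClosed_epigraph.preimage
    (continuous_fst.prodMk (continuous_coe_real_ereal.comp continuous_snd))

end Topology

section AffineMinorants

variable {H : Type*} [NormedAddCommGroup H] [InnerProductSpace ℝ H]

/-- The epigraph of the Fenchel conjugate `Φ*`. -/
def affineMinorants (Φ : H → EReal) : Set (H × ℝ) :=
  {q | ∀ x, ((⟪q.1, x⟫ - q.2 : ℝ) : EReal) ≤ Φ x}

/-- The effective domain of the Fenchel conjugate `Φ*`. -/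
def conjDomain (Φ : H → EReal) : Set H := Prod.fst '' affineMinorants Φ

variable {Φ : H → EReal}

@[simp]
lemma mem_affineMinorants {q : H × ℝ} :
    q ∈ affineMinorants Φ ↔ ∀ x, ((⟪q.1, x⟫ - q.2 : ℝ) : EReal) ≤ Φ x := Iff.rfl

lemma convex_affineMinorants (Φ : H → EReal) : Convex ℝ (affineMinorants Φ) := by
  rintro ⟨p₁, c₁⟩ h₁ ⟨p₂, c₂⟩ h₂ a b ha hb hab
  rw [mem_affineMinorants] at h₁ h₂ ⊢
  intro x
  have hcombo : ⟪a • p₁ + b • p₂, x⟫ - (a * c₁ + b * c₂)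
      = a • (⟪p₁, x⟫ - c₁) + b • (⟪p₂, x⟫ - c₂) := by
    simp only [inner_add_left, real_inner_smul_left, smul_eq_mul]; ring
  calc ((⟪a • p₁ + b • p₂, x⟫ - (a * c₁ + b * c₂) : ℝ) : EReal)
      ≤ ((max (⟪p₁, x⟫ - c₁) (⟪p₂, x⟫ - c₂) : ℝ) : EReal) := by
        rw [hcombo]; exact_mod_cast Convex.combo_le_max _ _ ha hb hab
    _ ≤ Φ x := EReal.coe_strictMono.monotone.map_max.trans_le (max_le (h₁ x) (h₂ x))

lemma isClosed_affineMinorants (Φ : H → EReal) : IsClosed (affineMinorants Φ) := by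
  simp only [affineMinorants, ofPred_forall]
  exact isClosed_iInter fun x =>
    isClosed_le (continuous_coe_real_ereal.comp (by fun_prop)) continuous_const

lemma mem_affineMinorants_of_le {p : H} {c c' : ℝ} (h : (p, c) ∈ affineMinorants Φ)
    (hc : c ≤ c') : (p, c') ∈ affineMinorants Φ := fun x =>
  (EReal.coe_le_coe_iff.2 (by linarith)).trans (h x)

lemma mem_affineMinorants_iff (hΦ : ∀ x, Φ x ≠ ⊥) {p : H} {c : ℝ} :
    (p, c) ∈ affineMinorants Φ ↔ ∀ x, Φ x ≠ ⊤ → ⟪p, x⟫ - c ≤ (Φ x).toReal := by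
  refine forall_congr' fun x => ?_
  rcases eq_or_ne (Φ x) ⊤ with hx | hx
  · simp [hx]
  · simp only [ne_eq, hx, not_false_eq_true, forall_const]
    rw [← EReal.coe_le_coe_iff, EReal.coe_toReal hx (hΦ x)]

lemma mem_affineMinorants_of_mem_subDiff {x y : H} (hy : y ∈ SubDiff Φ x) :
    (y, ⟪y, x⟫ - (Φ x).toReal) ∈ affineMinorants Φ := by
  obtain ⟨hx, hx', hsub⟩ := hy
  intro z
  calc ((⟪y, z⟫ - (⟪y, x⟫ - (Φ x).toReal) : ℝ) : EReal)
      = ((Φ x).toReal : EReal) + ((⟪y, z - x⟫ : ℝ) : EReal) := by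
        rw [← EReal.coe_add, inner_sub_right]; ring_nf
    _ ≤ Φ z := by rw [EReal.coe_toReal hx hx']; exact hsub z

/-- The equality case of the Fenchel–Young inequality. -/
lemma mem_subDiff_of_mem_affineMinorants {x y : H} {m : ℝ} (hx : Φ x ≠ ⊥)
    (hm : (y, m) ∈ affineMinorants Φ) (hle : Φ x ≤ ((⟪y, x⟫ - m : ℝ) : EReal)) :
    y ∈ SubDiff Φ x := by
  have hx' : Φ x ≠ ⊤ := ne_top_of_le_ne_top (EReal.coe_ne_top _) hle
  refine ⟨hx', hx, fun z => ?_⟩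
  rw [← EReal.coe_toReal hx' hx] at hle ⊢
  calc ((Φ x).toReal : EReal) + ((⟪y, z - x⟫ : ℝ) : EReal)
      ≤ ((⟪y, z⟫ - m : ℝ) : EReal) := by
        rw [← EReal.coe_add, EReal.coe_le_coe_iff, inner_sub_right]
        linarith [EReal.coe_le_coe_iff.1 hle]
    _ ≤ Φ z := hm z

lemma subDiffRange_subset_conjDomain (Φ : H → EReal) : SubDiffRange Φ ⊆ conjDomain Φ :=
  fun _ ⟨_, hy⟩ => ⟨_, mem_affineMinorants_of_mem_subDiff hy, rfl⟩

lemma conjDomain_add_subset (φ₁ φ₂ : H → EReal) :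
    conjDomain φ₁ + conjDomain φ₂ ⊆ conjDomain fun x => φ₁ x + φ₂ x := by
  rintro _ ⟨_, ⟨⟨p₁, c₁⟩, h₁, rfl⟩, _, ⟨⟨p₂, c₂⟩, h₂, rfl⟩, rfl⟩
  refine ⟨(p₁ + p₂, c₁ + c₂), fun x => ?_, rfl⟩
  calc ((⟪p₁ + p₂, x⟫ - (c₁ + c₂) : ℝ) : EReal)
      = ((⟪p₁, x⟫ - c₁ : ℝ) : EReal) + ((⟪p₂, x⟫ - c₂ : ℝ) : EReal) := by
        rw [← EReal.coe_add, inner_add_left]; ring_nf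
    _ ≤ φ₁ x + φ₂ x := add_le_add (h₁ x) (h₂ x)

/-- Tilting an affine minorant by a hyperplane that lies above the epigraph of `Φ` gives again
an affine minorant. -/
lemma tilt_mem_affineMinorants (hΦ : ∀ x, Φ x ≠ ⊥) {p₀ v : H} {c₀ s u k : ℝ}
    (h₀ : (p₀, c₀) ∈ affineMinorants Φ) (hsep : ∀ x, Φ x ≠ ⊤ → ⟪v, x⟫ + (Φ x).toReal * s ≤ u)
    (hk : 0 ≤ k) (hks : 0 < 1 - k * s) :
    ((1 - k * s)⁻¹ • (p₀ + k • v), (1 - k * s)⁻¹ * (c₀ + k * u)) ∈ affineMinorants Φ := by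
  rw [mem_affineMinorants_iff hΦ] at h₀ ⊢
  intro x hx
  simp only [real_inner_smul_left, inner_add_left]
  rw [← mul_sub, inv_mul_le_iff₀ hks]
  nlinarith [h₀ x hx, mul_le_mul_of_nonneg_left (hsep x hx) hk]

/-- `Φ*(y)` is the least element of this fibre. -/
lemma exists_isLeast_affineMinorants (hp : ProperFun Φ) {y : H} {c : ℝ}
    (hy : (y, c) ∈ affineMinorants Φ) : ∃ m, IsLeast {t | (y, t) ∈ affineMinorants Φ} m := by
  obtain ⟨x₀, hx₀⟩ := hp.2
  have hbdd : BddBelow {t | (y, t) ∈ affineMinorants Φ} := by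
    refine ⟨⟪y, x₀⟫ - (Φ x₀).toReal, fun t ht => ?_⟩
    have := (mem_affineMinorants_iff hp.1).1 ht x₀ hx₀
    linarith
  exact ⟨_, ((isClosed_affineMinorants Φ).preimage (Continuous.prodMk_right y)).isLeast_csInf
    ⟨c, hy⟩ hbdd⟩

end AffineMinorants

section Regularization

variable {H : Type*} [NormedAddCommGroup H] [InnerProductSpace ℝ H] {Φ : H → EReal}

lemma conjDomain_add_sq_norm {ε : ℝ} (hε : 0 < ε) (hΦ : (conjDomain Φ).Nonempty) :
    conjDomain (fun x => Φ x + ((ε / 2 * ‖x‖ ^ 2 : ℝ) : EReal)) = univ := by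
  obtain ⟨_, ⟨⟨y, C⟩, hyC, rfl⟩⟩ := hΦ
  refine eq_univ_of_forall fun p => ⟨(p, C + ‖p - y‖ ^ 2 / (2 * ε)), fun x => ?_, rfl⟩
  have hamgm : ‖p - y‖ * ‖x‖ ≤ ‖p - y‖ ^ 2 / (2 * ε) + ε / 2 * ‖x‖ ^ 2 := by
    have : ‖p - y‖ ^ 2 / (2 * ε) + ε / 2 * ‖x‖ ^ 2 - ‖p - y‖ * ‖x‖
        = (‖p - y‖ - ε * ‖x‖) ^ 2 / (2 * ε) := by field_simp; ring
    nlinarith [this, show 0 ≤ (‖p - y‖ - ε * ‖x‖) ^ 2 / (2 * ε) by positivity]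
  have hpy : ⟪p, x⟫ - ⟪y, x⟫ ≤ ‖p - y‖ * ‖x‖ := by
    rw [← inner_sub_left]; exact real_inner_le_norm _ _
  calc ((⟪p, x⟫ - (C + ‖p - y‖ ^ 2 / (2 * ε)) : ℝ) : EReal)
      ≤ ((⟪y, x⟫ - C : ℝ) : EReal) + ((ε / 2 * ‖x‖ ^ 2 : ℝ) : EReal) := by
        rw [← EReal.coe_add, EReal.coe_le_coe_iff]; linarith
    _ ≤ Φ x + ((ε / 2 * ‖x‖ ^ 2 : ℝ) : EReal) := add_le_add_left (hyC x) _

lemma sub_smul_mem_subDiff_of_mem_subDiff_add_sq_norm (hbot : ∀ x, Φ x ≠ ⊥)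
    (hc : ConvexFunEReal Φ) {ε : ℝ} {x y : H}
    (hy : y ∈ SubDiff (fun z => Φ z + ((ε / 2 * ‖z‖ ^ 2 : ℝ) : EReal)) x) :
    y - ε • x ∈ SubDiff Φ x := by
  obtain ⟨hx, -, hsub⟩ := hy
  have hxt : Φ x ≠ ⊤ := fun h => hx (by simp only [h, EReal.top_add_coe])
  refine ⟨hxt, hbot x, fun z => ?_⟩
  rcases eq_or_ne (Φ z) ⊤ with hz | hz
  · simp [hz]
  obtain ⟨R, hR⟩ : ∃ R : ℝ, Φ x = R := ⟨_, (EReal.coe_toReal hxt (hbot x)).symm⟩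
  obtain ⟨Z, hZ⟩ : ∃ Z : ℝ, Φ z = Z := ⟨_, (EReal.coe_toReal hz (hbot z)).symm⟩
  -- compare the subgradient inequality at `x + t • (z - x)` with convexity, then let `t → 0`
  have hstep : ∀ t : ℝ, 0 < t → t ≤ 1 →
      ⟪y - ε • x, z - x⟫ ≤ Z - R + t * (ε / 2 * ‖z - x‖ ^ 2) := by
    intro t ht ht1
    have hconv : Φ (x + t • (z - x)) ≤ (((1 - t) * R + t * Z : ℝ) : EReal) := by
      have h := hc x z (1 - t) t (by linarith) ht.le (by ring)
      rwa [show (1 - t) • x + t • z = x + t • (z - x) by module, hR, hZ,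
        ← EReal.coe_mul, ← EReal.coe_mul, ← EReal.coe_add] at h
    have h := (hsub (x + t • (z - x))).trans (add_le_add_left hconv _)
    simp only [hR, add_sub_cancel_left, ← EReal.coe_add, EReal.coe_le_coe_iff] at h
    rw [real_inner_smul_right, norm_add_sq_real, real_inner_smul_right, norm_smul,
      Real.norm_eq_abs, abs_of_pos ht] at h
    rw [inner_sub_left, real_inner_smul_left]
    nlinarith
  have hlim : Tendsto (fun t : ℝ => Z - R + t * (ε / 2 * ‖z - x‖ ^ 2)) (𝓝[>] 0)
      (𝓝 (Z - R)) := by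
    have hcont : Continuous fun t : ℝ => Z - R + t * (ε / 2 * ‖z - x‖ ^ 2) := by fun_prop
    simpa using (hcont.tendsto 0).mono_left nhdsWithin_le_nhds
  have hle : ⟪y - ε • x, z - x⟫ ≤ Z - R := ge_of_tendsto hlim (by
    filter_upwards [Ioo_mem_nhdsGT one_pos] with t ht using hstep t ht.1 ht.2.le)
  rw [hR, hZ, ← EReal.coe_add, EReal.coe_le_coe_iff]
  linarith

end Regularization

section Hilbert

variable {H : Type*} [NormedAddCommGroup H] [InnerProductSpace ℝ H] [CompleteSpace H]
  {Φ : H → EReal}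

lemma StrongDual.exists_apply_prod_eq_inner_add (f : StrongDual ℝ (H × ℝ)) :
    ∃ v : H, ∀ z t, f (z, t) = ⟪v, z⟫ + t * f (0, 1) := by
  refine ⟨(InnerProductSpace.toDual ℝ H).symm (f.comp (ContinuousLinearMap.inl ℝ H ℝ)),
    fun z t => ?_⟩
  rw [InnerProductSpace.toDual_symm_apply, show (z, t) = (z, 0) + t • ((0 : H), (1 : ℝ)) by simp,
    map_add, map_smul, smul_eq_mul]
  rfl

/-- Fenchel–Moreau: a proper convex lower semicontinuous function is the supremum of its
affine minorants. -/
theorem le_of_forall_mem_affineMinorants_le (hp : ProperFun Φ) (hc : ConvexFunEReal Φ)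
    (hl : LowerSemicontinuous Φ) (hA : (affineMinorants Φ).Nonempty) {w : H} {r : ℝ}
    (h : ∀ q ∈ affineMinorants Φ, ⟪q.1, w⟫ - q.2 ≤ r) : Φ w ≤ r := by
  by_contra hwr
  obtain ⟨f, u, hfA, hfw⟩ := geometric_hahn_banach_closed_point hc.convex_realEpigraph
    hl.isClosed_realEpigraph (show (w, r) ∉ realEpigraph Φ from hwr)
  obtain ⟨v, hv⟩ := f.exists_apply_prod_eq_inner_add
  set s := f (0, 1)
  have hsep : ∀ x, Φ x ≠ ⊤ → ⟪v, x⟫ + (Φ x).toReal * s ≤ u := fun x hx => by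
    rw [← hv]
    exact (hfA _ (EReal.coe_toReal hx (hp.1 x)).ge).le
  have hs : s ≤ 0 := by
    obtain ⟨x₀, hx₀⟩ := hp.2
    by_contra! hs
    -- the epigraph contains `(x₀, t)` for all `t ≥ Φ x₀`, on which `f` would be unbounded
    set t := max (Φ x₀).toReal ((u - ⟪v, x₀⟫) / s)
    have hft := hfA (x₀, t) ((EReal.coe_toReal hx₀ (hp.1 x₀)).ge.trans
      (EReal.coe_le_coe_iff.2 (le_max_left _ _)))
    have ht := (div_le_iff₀ hs).1 (le_max_right (Φ x₀).toReal ((u - ⟪v, x₀⟫) / s))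
    rw [hv] at hft
    linarith
  have hgap : 0 < ⟪v, w⟫ + r * s - u := by linarith [hv w r]
  obtain ⟨⟨p₀, c₀⟩, h₀⟩ := hA
  set a := ⟪p₀, w⟫ - c₀ - r
  have hk : 0 ≤ (|a| + 1) / (⟪v, w⟫ + r * s - u) := by positivity
  -- tilted far enough, the minorant exceeds `r` at `w`
  have hw := h _ (tilt_mem_affineMinorants hp.1 h₀ hsep hk (by nlinarith))
  simp only [real_inner_smul_left, inner_add_left] at hw
  rw [← mul_sub, inv_mul_le_iff₀ (by nlinarith)] at hw
  have hkg : (|a| + 1) / (⟪v, w⟫ + r * s - u) * (⟪v, w⟫ + r * s - u) = |a| + 1 :=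
    div_mul_cancel₀ _ hgap.ne'
  nlinarith [le_abs_self a, neg_abs_le a]

/-- `(y, Φ* y)` is a boundary point of the epigraph of `Φ*`; the slope `x` of a supporting
hyperplane there satisfies `Φ x + Φ* y = ⟪y, x⟫` by Fenchel–Moreau. -/
theorem mem_subDiffRange_of_mem_interior_affineMinorants (hp : ProperFun Φ)
    (hc : ConvexFunEReal Φ) (hl : LowerSemicontinuous Φ) {y : H} {c : ℝ}
    (hyc : (y, c) ∈ interior (affineMinorants Φ)) : y ∈ SubDiffRange Φ := by
  have hA := convex_affineMinorants Φ
  obtain ⟨m, hm, hmin⟩ := exists_isLeast_affineMinorants hp (interior_subset hyc)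
  have hym : (y, m) ∉ interior (affineMinorants Φ) := fun h => by
    obtain ⟨t, htm, ht⟩ :=
      ((Continuous.prodMk_right y).tendsto m |>.eventually (isOpen_interior.mem_nhds h)).exists_lt
    exact htm.not_ge (hmin (show (y, t) ∈ affineMinorants Φ from interior_subset ht))
  obtain ⟨f, hf⟩ := geometric_hahn_banach_open_point hA.interior isOpen_interior hym
  have hfA : ∀ q ∈ affineMinorants Φ, f q ≤ f (y, m) := fun q hq =>
    closure_minimal (fun q' hq' => (hf q' hq').le) (isClosed_le f.continuous continuous_const)
      ((hA.closure_interior_eq_closure_of_nonempty_interior ⟨_, hyc⟩).symm ▸ subset_closure hq)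
  obtain ⟨v, hv⟩ := f.exists_apply_prod_eq_inner_add
  set s := f (0, 1)
  have hs : 0 < -s := by
    have h := hf _ hyc
    rw [hv, hv] at h
    nlinarith [hmin (show (y, c) ∈ affineMinorants Φ from interior_subset hyc)]
  refine ⟨(-s)⁻¹ • v, mem_subDiff_of_mem_affineMinorants (hp.1 _) hm
    (le_of_forall_mem_affineMinorants_le hp hc hl ⟨_, hm⟩ fun q hq => ?_)⟩
  have h := hfA q hq
  rw [hv, hv] at h
  simp only [real_inner_smul_right, real_inner_comm v]
  have : (-s)⁻¹ * (⟪v, q.1⟫ - ⟪v, y⟫) ≤ q.2 - m := by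
    rw [inv_mul_le_iff₀ hs]
    linarith
  linarith [mul_sub (-s)⁻¹ ⟪v, q.1⟫ ⟪v, y⟫]

lemma nonempty_interior_affineMinorants (h : (interior (conjDomain Φ)).Nonempty) :
    (interior (affineMinorants Φ)).Nonempty := by
  set F : ℕ → Set H := fun n => {p | (p, (n : ℝ)) ∈ affineMinorants Φ}
  have hF : ∀ n, IsClosed (F n) := fun n =>
    (isClosed_affineMinorants Φ).preimage (continuous_id.prodMk continuous_const)
  have hcover : interior (conjDomain Φ) ⊆ ⋃ n, F n := fun _ hp => by
    obtain ⟨⟨p, c⟩, hpc, rfl⟩ := interior_subset hp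
    obtain ⟨n, hn⟩ := exists_nat_ge c
    exact mem_iUnion.2 ⟨n, mem_affineMinorants_of_le hpc hn⟩
  obtain ⟨n, p, hp⟩ : ∃ n, (interior (F n)).Nonempty := by
    by_contra! hF'
    exact not_isMeagre_of_isOpen isOpen_interior h ((isMeagre_iUnion fun n =>
      ((hF n).isNowhereDense_iff.2 (hF' n)).isMeagre).mono hcover)
  have hbox : interior (F n) ×ˢ Ioi (n : ℝ) ⊆ affineMinorants Φ := fun q hq =>
    mem_affineMinorants_of_le (interior_subset hq.1 : q.1 ∈ F n) (le_of_lt hq.2)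
  exact ⟨(p, n + 1), interior_maximal hbox (isOpen_interior.prod isOpen_Ioi) ⟨hp, by simp⟩⟩

theorem interior_conjDomain_subset_subDiffRange (hp : ProperFun Φ) (hc : ConvexFunEReal Φ)
    (hl : LowerSemicontinuous Φ) : interior (conjDomain Φ) ⊆ SubDiffRange Φ := by
  intro y hy
  obtain ⟨⟨_, c⟩, hyc, rfl⟩ := (convex_affineMinorants Φ).interior_image_fst_subset
    (nonempty_interior_affineMinorants ⟨y, hy⟩) hy
  exact mem_subDiffRange_of_mem_interior_affineMinorants hp hc hl hyc

lemma exists_sub_smul_mem_subDiff (hp : ProperFun Φ) (hc : ConvexFunEReal Φ)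
    (hl : LowerSemicontinuous Φ) {y : H} {C ε : ℝ} (hyC : (y, C) ∈ affineMinorants Φ)
    (hε : 0 < ε) {x₀ : H} (hx₀ : Φ x₀ ≠ ⊤) :
    ∃ x, y - ε • x ∈ SubDiff Φ x ∧
      ‖ε • x‖ ^ 2 ≤ ε * (2 * ((Φ x₀).toReal - ⟪y, x₀⟫ + C) + ε * ‖x₀‖ ^ 2) := by
  set Φε := fun x => Φ x + ((ε / 2 * ‖x‖ ^ 2 : ℝ) : EReal) with hΦε
  have hpε : ProperFun Φε :=
    hp.add ⟨fun _ => EReal.coe_ne_bot _, 0, EReal.coe_ne_top _⟩ ⟨x₀, hx₀, EReal.coe_ne_top _⟩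
  have hcε : ConvexFunEReal Φε := hc.add (((convexOn_norm convex_univ).pow
    (fun _ _ => norm_nonneg _) 2).smul (by positivity : (0 : ℝ) ≤ ε / 2)).convexFunEReal_coe
  have hlε : LowerSemicontinuous Φε := hl.ereal_add
    (continuous_coe_real_ereal.comp (by fun_prop)).lowerSemicontinuous hp.1
    fun _ => EReal.coe_ne_bot _
  obtain ⟨x, hx⟩ := interior_conjDomain_subset_subDiffRange hpε hcε hlε (by
    rw [conjDomain_add_sq_norm hε ⟨y, _, hyC, rfl⟩, interior_univ]; exact mem_univ y)
  have hpeel := sub_smul_mem_subDiff_of_mem_subDiff_add_sq_norm hp.1 hc hx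
  refine ⟨x, hpeel, ?_⟩
  obtain ⟨R, hR⟩ : ∃ R : ℝ, Φ x = R := ⟨_, (EReal.coe_toReal hpeel.1 hpeel.2.1).symm⟩
  obtain ⟨T, hT⟩ : ∃ T : ℝ, Φ x₀ = T := ⟨_, (EReal.coe_toReal hx₀ (hp.1 x₀)).symm⟩
  have hsub := hx.2.2 x₀
  have hmin := hyC x
  simp only [hΦε, hR, hT, ← EReal.coe_add, EReal.coe_le_coe_iff] at hsub hmin
  rw [hT, EReal.toReal_coe, norm_smul, mul_pow, Real.norm_eq_abs, sq_abs]
  rw [inner_sub_right] at hsub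
  nlinarith

theorem conjDomain_subset_closure_subDiffRange (hp : ProperFun Φ) (hc : ConvexFunEReal Φ)
    (hl : LowerSemicontinuous Φ) : conjDomain Φ ⊆ closure (SubDiffRange Φ) := by
  rintro _ ⟨⟨y, C⟩, hyC, rfl⟩
  obtain ⟨x₀, hx₀⟩ := hp.2
  set K := 2 * ((Φ x₀).toReal - ⟪y, x₀⟫ + C)
  have hlim : Tendsto (fun ε : ℝ => ε * (K + ε * ‖x₀‖ ^ 2)) (𝓝[>] 0) (𝓝 0) := by
    have hcont : Continuous fun ε : ℝ => ε * (K + ε * ‖x₀‖ ^ 2) := by fun_prop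
    simpa using (hcont.tendsto 0).mono_left nhdsWithin_le_nhds
  refine Metric.mem_closure_iff.2 fun δ hδ => ?_
  obtain ⟨ε, hεδ, hε⟩ :=
    ((hlim.eventually (gt_mem_nhds (pow_pos hδ 2))).and self_mem_nhdsWithin).exists
  obtain ⟨x, hx, hbound⟩ := exists_sub_smul_mem_subDiff hp hc hl hyC hε hx₀
  refine ⟨_, ⟨x, hx⟩, ?_⟩
  rw [dist_eq_norm, sub_sub_cancel]
  exact lt_of_pow_lt_pow_left₀ 2 hδ.le (hbound.trans_lt hεδ)

end Hilbert

theorem brezis_haraux_almost_equal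
    {H : Type*} [NormedAddCommGroup H] [InnerProductSpace ℝ H] [CompleteSpace H]
    (φ₁ φ₂ : H → EReal)
    (h₁p : ProperFun φ₁) (h₂p : ProperFun φ₂)
    (h₁c : ConvexFunEReal φ₁) (h₂c : ConvexFunEReal φ₂)
    (h₁l : LowerSemicontinuous φ₁) (h₂l : LowerSemicontinuous φ₂)
    (hdom : ∃ x : H, φ₁ x ≠ ⊤ ∧ φ₁ x ≠ ⊥ ∧ φ₂ x ≠ ⊤ ∧ φ₂ x ≠ ⊥)
    (hsum : ∀ x : H, SubDiff (fun z => φ₁ z + φ₂ z) x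
        = {y : H | ∃ y₁ ∈ SubDiff φ₁ x, ∃ y₂ ∈ SubDiff φ₂ x, y = y₁ + y₂}) :
    closure (SubDiffRange (fun x => φ₁ x + φ₂ x))
        = closure (SubDiffRange φ₁ + SubDiffRange φ₂) ∧
    interior (SubDiffRange (fun x => φ₁ x + φ₂ x))
        = interior (SubDiffRange φ₁ + SubDiffRange φ₂) := by
  obtain ⟨x₀, h₁x₀, -, h₂x₀, -⟩ := hdom
  have hp := h₁p.add h₂p ⟨x₀, h₁x₀, h₂x₀⟩
  have hc := h₁c.add h₂c
  have hl := h₁l.ereal_add h₂l h₁p.1 h₂p.1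
  refine closure_eq_and_interior_eq_of_subset_of_subset ?_ ?_
    (conjDomain_subset_closure_subDiffRange hp hc hl)
    (interior_conjDomain_subset_subDiffRange hp hc hl)
  · rintro _ ⟨x, hx⟩
    obtain ⟨y₁, hy₁, y₂, hy₂, rfl⟩ := (hsum x).subset hx
    exact add_mem_add ⟨x, hy₁⟩ ⟨x, hy₂⟩
  · exact (add_subset_add (subDiffRange_subset_conjDomain φ₁)
      (subDiffRange_subset_conjDomain φ₂)).trans (conjDomain_add_subset φ₁ φ₂)
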